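/- Let (P,⋆,≺) be a polynomial algebra of solvable type over a field k, L an involutive division, I ⊆ P a nonzero left ideal, and ℋ ⊂ I a finite set of nonzero polynomials. Then ℋ is a weak involutive basis of I (i.e., the leading exponents of ℋ form a weak involutive basis of the monoid ideal of leading exponents of I) if and only if every f ∈ I can be written f = Σ_{h∈ℋ} P_h ⋆ h with each P_h a polynomial in the multiplicative variables of h and le(P_h ⋆ h) ⪯ le(f). Furthermore, ℋ is a strong involutive basis if and only if this representation is always unique. -/

import Mathlib

/-!
Leading exponents are additive, `le(f ⋆ g) = le f + le g`, and a term order is a well-order.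
If the involutive cones of `le(ℋ)` cover `le(I)`, then for `f ∈ I` the exponent `le f` lies in
the cone of some `h ∈ ℋ`, so `le f = σ + le h` with `σ` multiplicative for `h`; subtracting a
multiple of `x^σ ⋆ h` lowers `le f`, and well-founded induction yields an involutive standard
representation. Conversely, in such a representation of `f` some term `P_h ⋆ h` has leading
exponent `le f`, which therefore lies in the cone of `h`.
For uniqueness, disjoint cones force the leading exponents of the nonzero terms of a
representation of `0` to be distinct, so the largest cannot cancel. If instead `le h₁` lies in
the cone of some `h₂ ≠ h₁`, reducing `h₁` by `h₂` gives a representation of `h₁` other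
than the trivial one.
-/

/-- Polynomials in `n` variables over `R`, represented by their coefficient families
indexed by multi indices. -/
abbrev SPoly (R : Type) [CommRing R] (n : ℕ) := (Fin n → ℕ) →₀ R

/-- The leading exponent of a polynomial with respect to a term order (the maximal
element of its support; `0` for the zero polynomial). -/
noncomputable def lexp {R : Type} [CommRing R] {n : ℕ} (ord : LinearOrder (Fin n → ℕ))
    (f : SPoly R n) : Fin n → ℕ :=
  (@Finset.max _ ord f.support).unbotD 0

/-- A polynomial algebra of solvable type `(P, ⋆, ≺)`: the `R`-module `R[x₁,…,xₙ]`
equipped with an associative unital multiplication `⋆` such that `r ⋆ f = r • f` for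
scalars, and with respect to a term order `≺` (a monoid order) the leading exponent of
`x^μ ⋆ x^ν` is `μ + ν` and of `x^μ ⋆ r` (for `r ≠ 0`) is `μ`. -/
structure SolvMul (R : Type) [CommRing R] (n : ℕ) (ord : LinearOrder (Fin n → ℕ)) where
  star : SPoly R n → SPoly R n → SPoly R n
  zero_min : ∀ μ : Fin n → ℕ, ord.le 0 μ
  add_compat : ∀ μ ν σ : Fin n → ℕ, ord.lt μ ν → ord.lt (μ + σ) (ν + σ)
  star_assoc : ∀ f g h : SPoly R n, star (star f g) h = star f (star g h)
  star_add : ∀ f g h : SPoly R n, star f (g + h) = star f g + star f h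
  add_star : ∀ f g h : SPoly R n, star (f + g) h = star f h + star g h
  one_star : ∀ f : SPoly R n, star (Finsupp.single 0 1) f = f
  star_one : ∀ f : SPoly R n, star f (Finsupp.single 0 1) = f
  scalar_star : ∀ (r : R) (f : SPoly R n), star (Finsupp.single 0 r) f = r • f
  mono_mono : ∀ μ ν : Fin n → ℕ,
    star (Finsupp.single μ 1) (Finsupp.single ν 1) ≠ 0 ∧
      lexp ord (star (Finsupp.single μ 1) (Finsupp.single ν 1)) = μ + ν
  mono_scalar : ∀ (μ : Fin n → ℕ) (r : R), r ≠ 0 →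
    star (Finsupp.single μ 1) (Finsupp.single 0 r) ≠ 0 ∧
      lexp ord (star (Finsupp.single μ 1) (Finsupp.single 0 r)) = μ


/-- The restricted cone of `ν` determined by a set `N` of multiplicative indices. -/
def rcone {n : ℕ} (N : Set (Fin n)) (ν : Fin n → ℕ) : Set (Fin n → ℕ) :=
  {μ | (∀ i, ν i ≤ μ i) ∧ ∀ i ∉ N, μ i = ν i}

/-- An involutive division on `ℕ^n`. -/
structure InvDiv (n : ℕ) where
  mult : Finset (Fin n → ℕ) → (Fin n → ℕ) → Set (Fin n)
  nested : ∀ (𝒩 : Finset (Fin n → ℕ)), ∀ μ ∈ 𝒩, ∀ ν ∈ 𝒩,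
    (rcone (mult 𝒩 μ) μ ∩ rcone (mult 𝒩 ν) ν).Nonempty →
      rcone (mult 𝒩 μ) μ ⊆ rcone (mult 𝒩 ν) ν ∨
        rcone (mult 𝒩 ν) ν ⊆ rcone (mult 𝒩 μ) μ
  mono : ∀ (𝒩 𝒩' : Finset (Fin n → ℕ)), 𝒩' ⊆ 𝒩 → ∀ ν ∈ 𝒩', mult 𝒩 ν ⊆ mult 𝒩' ν

/-- The set of leading exponents of a finite set of polynomials. -/
noncomputable def leadSet {R : Type} [CommRing R] {n : ℕ} (ord : LinearOrder (Fin n → ℕ))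
    (ℋ : Finset (SPoly R n)) : Finset (Fin n → ℕ) :=
  ℋ.image (lexp ord)

/-- The monoid ideal of leading exponents of (the nonzero elements of) a set of
polynomials. -/
def leadExps {R : Type} [CommRing R] {n : ℕ} (ord : LinearOrder (Fin n → ℕ))
    (I : Set (SPoly R n)) : Set (Fin n → ℕ) :=
  {μ | ∃ f ∈ I, f ≠ 0 ∧ lexp ord f = μ}

/-- `P` gives an involutive standard representation of `f` with respect to `ℋ`:
`f = Σ_{h∈ℋ} P_h ⋆ h`, every `P_h` only involves the multiplicative variables of `h`,
and `le(P_h ⋆ h) ⪯ le(f)`. -/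
def IsInvRep {R : Type} [CommRing R] {n : ℕ} (ord : LinearOrder (Fin n → ℕ))
    (A : SolvMul R n ord) (L : InvDiv n) (ℋ : Finset (SPoly R n)) (f : SPoly R n)
    (P : {h // h ∈ ℋ} → SPoly R n) : Prop :=
  f = ∑ h ∈ ℋ.attach, A.star (P h) h.1 ∧
    ∀ h : {h // h ∈ ℋ},
      (∀ μ ∈ (P h).support, ∀ i ∉ L.mult (leadSet ord ℋ) (lexp ord h.1), μ i = 0) ∧
      ord.le (lexp ord (A.star (P h) h.1)) (lexp ord f)

/-- `ℋ` is a weak involutive basis of the left ideal `I`: `ℋ ⊂ I \ {0}` and the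
leading exponents of `ℋ` form a weak involutive basis of the monoid ideal of leading
exponents of `I`. -/
def WeakInvBasis {R : Type} [CommRing R] {n : ℕ} (ord : LinearOrder (Fin n → ℕ))
    (L : InvDiv n) (I : Set (SPoly R n)) (ℋ : Finset (SPoly R n)) : Prop :=
  (↑ℋ : Set (SPoly R n)) ⊆ I ∧ (0 : SPoly R n) ∉ ℋ ∧
    (⋃ μ ∈ leadSet ord ℋ, rcone (L.mult (leadSet ord ℋ) μ) μ) = leadExps ord I

/-- `ℋ` is a strong involutive basis of `I`: a weak one whose involutive cones are
pairwise disjoint and whose elements have pairwise distinct leading exponents. -/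
def StrongInvBasis {R : Type} [CommRing R] {n : ℕ} (ord : LinearOrder (Fin n → ℕ))
    (L : InvDiv n) (I : Set (SPoly R n)) (ℋ : Finset (SPoly R n)) : Prop :=
  WeakInvBasis ord L I ℋ ∧ Set.InjOn (lexp ord) (↑ℋ : Set (SPoly R n)) ∧
    ∀ μ ∈ leadSet ord ℋ, ∀ ν ∈ leadSet ord ℋ, μ ≠ ν →
      Disjoint (rcone (L.mult (leadSet ord ℋ) μ) μ) (rcone (L.mult (leadSet ord ℋ) ν) ν)

/-- The exponents ordered by the term order `ord`: on `Fin n → ℕ` itself, instance search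
finds the pointwise order instead of `ord`. -/
def OrdExp {n : ℕ} (_ord : LinearOrder (Fin n → ℕ)) : Type := Fin n → ℕ

instance {n : ℕ} (ord : LinearOrder (Fin n → ℕ)) : LinearOrder (OrdExp ord) := ord

section Cones

variable {n : ℕ}

theorem mem_rcone_iff {N : Set (Fin n)} {μ ν : Fin n → ℕ} :
    μ ∈ rcone N ν ↔ ∃ σ, (∀ i ∉ N, σ i = 0) ∧ μ = σ + ν := by
  constructor
  · rintro ⟨hle, hN⟩
    refine ⟨μ - ν, fun i hi => by simp [hN i hi], ?_⟩
    funext i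
    simp [Nat.sub_add_cancel (hle i)]
  · rintro ⟨σ, hσ, rfl⟩
    exact ⟨fun i => by simp, fun i hi => by simp [hσ i hi]⟩

theorem self_mem_rcone (N : Set (Fin n)) (ν : Fin n → ℕ) : ν ∈ rcone N ν :=
  ⟨fun _ => le_rfl, fun _ _ => rfl⟩

theorem InvDiv.disjoint_rcone (L : InvDiv n) {𝒩 : Finset (Fin n → ℕ)} {μ ν : Fin n → ℕ}
    (hμ : μ ∈ 𝒩) (hν : ν ∈ 𝒩) (hμν : μ ∉ rcone (L.mult 𝒩 ν) ν)
    (hνμ : ν ∉ rcone (L.mult 𝒩 μ) μ) :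
    Disjoint (rcone (L.mult 𝒩 μ) μ) (rcone (L.mult 𝒩 ν) ν) := by
  rw [Set.disjoint_iff_inter_eq_empty, ← Set.not_nonempty_iff_eq_empty]
  intro hne
  rcases L.nested 𝒩 μ hμ ν hν hne with h | h
  · exact hμν (h (self_mem_rcone _ μ))
  · exact hνμ (h (self_mem_rcone _ ν))

end Cones

section TermOrder

variable {R : Type} [CommRing R] {n : ℕ} {ord : LinearOrder (Fin n → ℕ)}

local notation:50 a:51 " ≺ " b:51 => @LT.lt (OrdExp ord) _ (a : Fin n → ℕ) (b : Fin n → ℕ)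
local notation:50 a:51 " ⪯ " b:51 => @LE.le (OrdExp ord) _ (a : Fin n → ℕ) (b : Fin n → ℕ)

theorem lexp_zero : lexp ord (0 : SPoly R n) = 0 := by
  simp [lexp]

theorem lexp_mem_support {f : SPoly R n} (hf : f ≠ 0) : lexp ord f ∈ f.support := by
  let _ := ord
  obtain ⟨μ, hμ⟩ := Finset.max_of_nonempty (Finsupp.support_nonempty_iff.2 hf)
  rw [show lexp ord f = μ by rw [lexp, hμ]; rfl]
  exact Finset.mem_of_max hμ

theorem le_lexp {f : SPoly R n} {μ : Fin n → ℕ} (h : μ ∈ f.support) :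
    μ ⪯ lexp ord f := by
  let _ := ord
  obtain ⟨ν, hν⟩ := Finset.max_of_mem h
  rw [show lexp ord f = ν by rw [lexp, hν]; rfl]
  exact WithBot.coe_le_coe.1 (hν ▸ Finset.le_max h)

theorem apply_eq_zero_of_lexp_lt {f : SPoly R n} {μ : Fin n → ℕ} (h : lexp ord f ≺ μ) :
    f μ = 0 :=
  Finsupp.notMem_support_iff.1 fun hμ => not_le_of_gt h (le_lexp hμ)

theorem lexp_le {f : SPoly R n} {b : Fin n → ℕ} (h0 : (0 : Fin n → ℕ) ⪯ b)
    (h : ∀ μ ∈ f.support, μ ⪯ b) : lexp ord f ⪯ b := by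
  rcases eq_or_ne f 0 with rfl | hf
  · rwa [lexp_zero]
  · exact h _ (lexp_mem_support hf)

theorem lexp_add_le {f g : SPoly R n} {b : Fin n → ℕ} (h0 : (0 : Fin n → ℕ) ⪯ b)
    (hf : lexp ord f ⪯ b) (hg : lexp ord g ⪯ b) : lexp ord (f + g) ⪯ b := by
  classical
  refine lexp_le h0 fun μ hμ => ?_
  rcases Finset.mem_union.1 (Finsupp.support_add hμ) with hμ | hμ
  · exact (le_lexp hμ).trans hf
  · exact (le_lexp hμ).trans hg

theorem lexp_single {μ : Fin n → ℕ} {c : R} (hc : c ≠ 0) :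
    lexp ord (Finsupp.single μ c) = μ := by
  rw [lexp, Finsupp.support_single _ hc]
  rfl

theorem lexp_smul [IsDomain R] {c : R} (hc : c ≠ 0) (f : SPoly R n) :
    lexp ord (c • f) = lexp ord f := by
  rw [lexp, lexp, Finsupp.support_smul_eq hc]

theorem lexp_sum_eq {ι : Type*} {s : Finset ι} {g : ι → SPoly R n} {i₀ : ι}
    (hi₀ : i₀ ∈ s) (h₀ : g i₀ ≠ 0)
    (hlt : ∀ i ∈ s, i ≠ i₀ → lexp ord (g i) ≺ lexp ord (g i₀)) :
    ∑ i ∈ s, g i ≠ 0 ∧ lexp ord (∑ i ∈ s, g i) = lexp ord (g i₀) := by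
  have hcoeff : (∑ i ∈ s, g i) (lexp ord (g i₀)) = g i₀ (lexp ord (g i₀)) := by
    rw [Finsupp.finsetSum_apply]
    exact Finset.sum_eq_single_of_mem i₀ hi₀ fun i hi hne =>
      apply_eq_zero_of_lexp_lt (hlt i hi hne)
  have hmem : lexp ord (g i₀) ∈ (∑ i ∈ s, g i).support := by
    rw [Finsupp.mem_support_iff, hcoeff]
    exact Finsupp.mem_support_iff.1 (lexp_mem_support h₀)
  have hne : ∑ i ∈ s, g i ≠ 0 := ne_of_apply_ne (· (lexp ord (g i₀))) (by simpa using hmem)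
  refine ⟨hne, le_antisymm (α := OrdExp ord) ?_ (le_lexp hmem)⟩
  obtain ⟨i, hi, hμ⟩ := Finsupp.mem_support_finsetSum _ (lexp_mem_support hne)
  refine (le_lexp hμ).trans ?_
  rcases eq_or_ne i i₀ with rfl | hne
  · exact le_rfl
  · exact (hlt i hi hne).le

namespace SolvMul

protected theorem zero_le (A : SolvMul R n ord) (μ : Fin n → ℕ) : (0 : Fin n → ℕ) ⪯ μ :=
  A.zero_min μ

protected theorem add_lt_add_right (A : SolvMul R n ord) {μ ν : Fin n → ℕ} (h : μ ≺ ν)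
    (σ : Fin n → ℕ) : μ + σ ≺ ν + σ :=
  A.add_compat μ ν σ h

protected theorem add_lt_add_left (A : SolvMul R n ord) {μ ν : Fin n → ℕ} (h : μ ≺ ν)
    (σ : Fin n → ℕ) : σ + μ ≺ σ + ν := by
  rw [add_comm σ, add_comm σ]
  exact A.add_lt_add_right h σ

theorem le_of_forall_le (A : SolvMul R n ord) {μ ν : Fin n → ℕ} (h : ∀ i, μ i ≤ ν i) :
    μ ⪯ ν := by
  have hν : ν - μ + μ = ν := by
    funext i
    simp [Nat.sub_add_cancel (h i)]
  rcases (A.zero_le (ν - μ)).lt_or_eq with hlt | heq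
  · simpa [hν] using (A.add_lt_add_right hlt μ).le
  · rw [← hν, ← heq, zero_add]
    exact le_rfl

/-- A term order is a well-order: it extends the pointwise order, which is a well
quasi-order by Dickson's lemma. -/
theorem wellFoundedLT (A : SolvMul R n ord) : WellFoundedLT (OrdExp ord) :=
  wellQuasiOrderedLE_iff_wellFoundedLT.1 <|
    Monotone.wellQuasiOrderedLE_of_wellQuasiOrderedLE_of_surjective (α := Fin n → ℕ)
      (f := id) (fun _ _ h => A.le_of_forall_le h) Function.surjective_id

variable (A : SolvMul R n ord)

noncomputable def starRight (g : SPoly R n) : SPoly R n →+ SPoly R n :=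
  AddMonoidHom.mk' (A.star · g) fun f f' => A.add_star f f' g

noncomputable def starLeft (f : SPoly R n) : SPoly R n →+ SPoly R n :=
  AddMonoidHom.mk' (A.star f) (A.star_add f)

theorem zero_star (g : SPoly R n) : A.star 0 g = 0 :=
  (A.starRight g).map_zero

theorem neg_star (f g : SPoly R n) : A.star (-f) g = -A.star f g :=
  (A.starRight g).map_neg f

theorem sub_star (f f' g : SPoly R n) : A.star (f - f') g = A.star f g - A.star f' g :=
  (A.starRight g).map_sub f f'

theorem sum_star {ι : Type*} (s : Finset ι) (f : ι → SPoly R n) (g : SPoly R n) :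
    A.star (∑ i ∈ s, f i) g = ∑ i ∈ s, A.star (f i) g :=
  map_sum (A.starRight g) f s

theorem star_sum {ι : Type*} (s : Finset ι) (f : SPoly R n) (g : ι → SPoly R n) :
    A.star f (∑ i ∈ s, g i) = ∑ i ∈ s, A.star f (g i) :=
  map_sum (A.starLeft f) g s

theorem smul_star (c : R) (f g : SPoly R n) : A.star (c • f) g = c • A.star f g := by
  rw [← A.scalar_star, A.star_assoc, A.scalar_star]

theorem single_star (μ : Fin n → ℕ) (c : R) (g : SPoly R n) :
    A.star (Finsupp.single μ c) g = c • A.star (Finsupp.single μ 1) g := by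
  rw [← smul_star, Finsupp.smul_single_one]

section Domain

variable [IsDomain R]

theorem lexp_star_of_forall_single {f q : SPoly R n} (hf : f ≠ 0) {τ : Fin n → ℕ}
    (hq : ∀ μ, A.star (Finsupp.single μ 1) q ≠ 0 ∧
      lexp ord (A.star (Finsupp.single μ 1) q) = μ + τ) :
    A.star f q ≠ 0 ∧ lexp ord (A.star f q) = lexp ord f + τ := by
  have hterm : ∀ μ ∈ f.support, f μ • A.star (Finsupp.single μ 1) q ≠ 0 ∧
      lexp ord (f μ • A.star (Finsupp.single μ 1) q) = μ + τ := fun μ hμ =>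
    ⟨smul_ne_zero (Finsupp.mem_support_iff.1 hμ) (hq μ).1,
      by rw [lexp_smul (Finsupp.mem_support_iff.1 hμ), (hq μ).2]⟩
  have hdecomp : A.star f q = ∑ μ ∈ f.support, f μ • A.star (Finsupp.single μ 1) q := by
    conv_lhs => rw [← Finsupp.sum_single f, Finsupp.sum, A.sum_star]
    exact Finset.sum_congr rfl fun μ _ => A.single_star μ (f μ) q
  have htop := hterm _ (lexp_mem_support (ord := ord) hf)
  rw [hdecomp, ← htop.2]
  refine lexp_sum_eq (lexp_mem_support hf) htop.1 fun μ hμ hne => ?_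
  rw [(hterm μ hμ).2, htop.2]
  exact A.add_lt_add_right (lt_of_le_of_ne (le_lexp hμ) hne) τ

theorem lexp_star {f g : SPoly R n} (hf : f ≠ 0) (hg : g ≠ 0) :
    A.star f g ≠ 0 ∧ lexp ord (A.star f g) = lexp ord f + lexp ord g := by
  have hterm : ∀ ν ∈ g.support,
      A.star (A.star f (Finsupp.single 0 (g ν))) (Finsupp.single ν 1) ≠ 0 ∧
      lexp ord (A.star (A.star f (Finsupp.single 0 (g ν))) (Finsupp.single ν 1)) =
        lexp ord f + ν := by
    intro ν hν
    obtain ⟨hf', hlexp⟩ := A.lexp_star_of_forall_single hf (τ := 0) fun μ => by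
      simpa using A.mono_scalar μ _ (Finsupp.mem_support_iff.1 hν)
    obtain ⟨hf'', hlexp'⟩ := A.lexp_star_of_forall_single hf' (A.mono_mono · ν)
    exact ⟨hf'', by rw [hlexp', hlexp, add_zero]⟩
  have hdecomp : A.star f g = ∑ ν ∈ g.support,
      A.star (A.star f (Finsupp.single 0 (g ν))) (Finsupp.single ν 1) := by
    conv_lhs => rw [← Finsupp.sum_single g, Finsupp.sum, A.star_sum]
    refine Finset.sum_congr rfl fun ν _ => ?_
    rw [A.star_assoc, A.scalar_star, Finsupp.smul_single_one]
  have htop := hterm _ (lexp_mem_support (ord := ord) hg)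
  rw [hdecomp, ← htop.2]
  refine lexp_sum_eq (lexp_mem_support hg) htop.1 fun ν hν hne => ?_
  rw [(hterm ν hν).2, htop.2]
  exact A.add_lt_add_left (lt_of_le_of_ne (le_lexp hν) hne) _

theorem lexp_star_mem_rcone {N : Set (Fin n)} {p h : SPoly R n} (hp : p ≠ 0) (hh : h ≠ 0)
    (hpN : ∀ μ ∈ p.support, ∀ i ∉ N, μ i = 0) :
    lexp ord (A.star p h) ∈ rcone N (lexp ord h) :=
  mem_rcone_iff.2 ⟨lexp ord p, hpN _ (lexp_mem_support hp), (A.lexp_star hp hh).2⟩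

end Domain

end SolvMul

theorem mem_iUnion_rcone_leadSet {L : InvDiv n} {ℋ : Finset (SPoly R n)}
    {μ : Fin n → ℕ} :
    μ ∈ ⋃ ν ∈ leadSet ord ℋ, rcone (L.mult (leadSet ord ℋ) ν) ν ↔
      ∃ h ∈ ℋ, μ ∈ rcone (L.mult (leadSet ord ℋ) (lexp ord h)) (lexp ord h) := by
  simp only [Set.mem_iUnion, exists_prop, leadSet, Finset.mem_image]
  exact ⟨fun ⟨_, ⟨h, hh, rfl⟩, hμ⟩ => ⟨h, hh, hμ⟩,
    fun ⟨h, hh, hμ⟩ => ⟨_, ⟨h, hh, rfl⟩, hμ⟩⟩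

theorem eq_of_mem_rcone_of_mem_rcone (L : InvDiv n) {ℋ : Finset (SPoly R n)}
    (hinj : Set.InjOn (lexp ord) (↑ℋ : Set (SPoly R n)))
    (hdisj : ∀ μ ∈ leadSet ord ℋ, ∀ ν ∈ leadSet ord ℋ, μ ≠ ν →
      Disjoint (rcone (L.mult (leadSet ord ℋ) μ) μ) (rcone (L.mult (leadSet ord ℋ) ν) ν))
    {h₁ h₂ : SPoly R n} (hh₁ : h₁ ∈ ℋ) (hh₂ : h₂ ∈ ℋ) {μ : Fin n → ℕ}
    (hμ₁ : μ ∈ rcone (L.mult (leadSet ord ℋ) (lexp ord h₁)) (lexp ord h₁))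
    (hμ₂ : μ ∈ rcone (L.mult (leadSet ord ℋ) (lexp ord h₂)) (lexp ord h₂)) :
    h₁ = h₂ :=
  hinj hh₁ hh₂ <| by_contra fun hne => Set.disjoint_left.1
    (hdisj _ (Finset.mem_image_of_mem _ hh₁) _ (Finset.mem_image_of_mem _ hh₂) hne)
    hμ₁ hμ₂

section InvolutiveRep

variable (A : SolvMul R n ord) (L : InvDiv n) {ℋ : Finset (SPoly R n)}

theorem IsInvRep.lexp_star_le {f : SPoly R n} {P : {h // h ∈ ℋ} → SPoly R n}
    (hP : IsInvRep ord A L ℋ f P) (h : {h // h ∈ ℋ}) :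
    lexp ord (A.star (P h) h) ⪯ lexp ord f :=
  (hP.2 h).2

theorem isInvRep_zero : IsInvRep ord A L ℋ 0 0 :=
  ⟨by simp [A.zero_star], fun _ => ⟨by simp, by simp [A.zero_star, lexp_zero]⟩⟩

theorem isInvRep_self [DecidableEq (SPoly R n)] {h : SPoly R n} (hh : h ∈ ℋ) :
    IsInvRep ord A L ℋ h (Pi.single ⟨h, hh⟩ (Finsupp.single 0 1)) := by
  refine ⟨?_, fun h' => ?_⟩
  · rw [Finset.sum_eq_single_of_mem ⟨h, hh⟩ (Finset.mem_attach _ _) fun h' _ hne => by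
      rw [Pi.single_eq_of_ne hne, A.zero_star], Pi.single_eq_same, A.one_star]
  · rcases eq_or_ne h' ⟨h, hh⟩ with rfl | hne
    · rw [Pi.single_eq_same, A.one_star]
      refine ⟨fun μ hμ i _ => ?_, ord.le_refl _⟩
      rw [Finset.mem_singleton.1 (Finsupp.support_single_subset hμ)]
      rfl
    · rw [Pi.single_eq_of_ne hne, A.zero_star, lexp_zero]
      exact ⟨by simp, A.zero_le _⟩

theorem IsInvRep.add_single [DecidableEq (SPoly R n)] {r f : SPoly R n}
    {P : {h // h ∈ ℋ} → SPoly R n} (hP : IsInvRep ord A L ℋ r P) {h : SPoly R n}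
    (hh : h ∈ ℋ) {σ : Fin n → ℕ} (hσ : ∀ i ∉ L.mult (leadSet ord ℋ) (lexp ord h), σ i = 0)
    {c : R}
    (hf : f = r + A.star (Finsupp.single σ c) h) (hr : lexp ord r ⪯ lexp ord f)
    (hσc : lexp ord (A.star (Finsupp.single σ c) h) ⪯ lexp ord f) :
    IsInvRep ord A L ℋ f
      (P + Pi.single (⟨h, hh⟩ : {h // h ∈ ℋ}) (Finsupp.single σ c)) := by
  refine ⟨?_, fun h' => ⟨fun μ hμ i hi => ?_, ?_⟩⟩
  · simp only [Pi.add_apply, A.add_star, Finset.sum_add_distrib, ← hP.1]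
    rw [Finset.sum_eq_single_of_mem ⟨h, hh⟩ (Finset.mem_attach _ _) fun h' _ hne => by
      rw [Pi.single_eq_of_ne hne, A.zero_star], Pi.single_eq_same, hf]
  · rcases Finset.mem_union.1 (Finsupp.support_add hμ) with hμ | hμ
    · exact (hP.2 h').1 μ hμ i hi
    · rcases eq_or_ne h' ⟨h, hh⟩ with rfl | hne
      · rw [Pi.single_eq_same] at hμ
        rw [Finset.mem_singleton.1 (Finsupp.support_single_subset hμ)]
        exact hσ i hi
      · simp [Pi.single_eq_of_ne hne] at hμ
  · rw [Pi.add_apply, A.add_star]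
    refine lexp_add_le (A.zero_le _) ((hP.lexp_star_le A L h').trans hr) ?_
    rcases eq_or_ne h' ⟨h, hh⟩ with rfl | hne
    · rwa [Pi.single_eq_same]
    · rw [Pi.single_eq_of_ne hne, A.zero_star, lexp_zero]
      exact A.zero_le _

variable [IsDomain R]

theorem IsInvRep.exists_lexp_mem_rcone (hH0 : (0 : SPoly R n) ∉ ℋ) {f : SPoly R n}
    {P : {h // h ∈ ℋ} → SPoly R n} (hP : IsInvRep ord A L ℋ f P) (hf0 : f ≠ 0) :
    ∃ h ∈ ℋ, lexp ord f ∈ rcone (L.mult (leadSet ord ℋ) (lexp ord h)) (lexp ord h) := by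
  obtain ⟨h, -, hfh⟩ := Finset.exists_ne_zero_of_sum_ne_zero
    (f := fun h : {h // h ∈ ℋ} => A.star (P h) h (lexp ord f)) <| by
      rw [← Finsupp.finsetSum_apply, ← hP.1]
      exact Finsupp.mem_support_iff.1 (lexp_mem_support hf0)
  have hPh0 : P h ≠ 0 := fun hz => hfh (by simp [hz, A.zero_star])
  have heq : lexp ord (A.star (P h) h) = lexp ord f :=
    le_antisymm (α := OrdExp ord) (hP.lexp_star_le A L h)
      (le_lexp (Finsupp.mem_support_iff.2 hfh))
  exact ⟨h, h.2, heq ▸ A.lexp_star_mem_rcone hPh0 (ne_of_mem_of_not_mem h.2 hH0) (hP.2 h).1⟩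

theorem iUnion_rcone_subset_leadExps {I : Set (SPoly R n)}
    (hHI : (↑ℋ : Set (SPoly R n)) ⊆ I) (hH0 : (0 : SPoly R n) ∉ ℋ)
    (hImul : ∀ f ∈ I, ∀ p : SPoly R n, A.star p f ∈ I) :
    (⋃ ν ∈ leadSet ord ℋ, rcone (L.mult (leadSet ord ℋ) ν) ν) ⊆ leadExps ord I := by
  intro μ hμ
  obtain ⟨h, hh, hcone⟩ := mem_iUnion_rcone_leadSet.1 hμ
  obtain ⟨σ, -, rfl⟩ := mem_rcone_iff.1 hcone
  obtain ⟨hne, hlexp⟩ := A.lexp_star (Finsupp.single_ne_zero.2 (one_ne_zero (α := R)))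
    (ne_of_mem_of_not_mem hh hH0)
  exact ⟨_, hImul h (hHI hh) (Finsupp.single σ 1), hne, by rw [hlexp, lexp_single one_ne_zero]⟩

/-- With pairwise disjoint involutive cones, the leading exponents of the nonzero terms
`D h ⋆ h` are pairwise distinct, so the largest of them survives in the sum. -/
theorem eq_zero_of_sum_star_eq_zero (hH0 : (0 : SPoly R n) ∉ ℋ)
    (hinj : Set.InjOn (lexp ord) (↑ℋ : Set (SPoly R n)))
    (hdisj : ∀ μ ∈ leadSet ord ℋ, ∀ ν ∈ leadSet ord ℋ, μ ≠ ν →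
      Disjoint (rcone (L.mult (leadSet ord ℋ) μ) μ) (rcone (L.mult (leadSet ord ℋ) ν) ν))
    {D : {h // h ∈ ℋ} → SPoly R n}
    (hD : ∀ h : {h // h ∈ ℋ}, ∀ μ ∈ (D h).support,
      ∀ i ∉ L.mult (leadSet ord ℋ) (lexp ord h.1), μ i = 0)
    (hsum : ∑ h ∈ ℋ.attach, A.star (D h) h = 0) : D = 0 := by
  classical
  by_contra hD0
  obtain ⟨m, hm, hmax⟩ := Finset.exists_max_image (ℋ.attach.filter (D · ≠ 0))
    (fun h => (lexp ord (A.star (D h) h) : OrdExp ord)) <| by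
      obtain ⟨h, hh⟩ := Function.ne_iff.1 hD0
      exact ⟨h, by simpa using hh⟩
  have hne0 (h : {h // h ∈ ℋ}) : (h : SPoly R n) ≠ 0 := ne_of_mem_of_not_mem h.2 hH0
  have hDm : D m ≠ 0 := (Finset.mem_filter.1 hm).2
  have hcone (h : {h // h ∈ ℋ}) (hDh : D h ≠ 0) := A.lexp_star_mem_rcone hDh (hne0 h) (hD h)
  have hcoeff : ∀ h ∈ ℋ.attach, h ≠ m →
      A.star (D h) h (lexp ord (A.star (D m) m)) = 0 := by
    intro h _ hhm
    rcases eq_or_ne (D h) 0 with hDh | hDh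
    · rw [hDh, A.zero_star, Finsupp.zero_apply]
    refine apply_eq_zero_of_lexp_lt <| lt_of_le_of_ne (hmax h (by simpa using hDh)) fun he =>
      hhm (Subtype.ext ?_)
    exact eq_of_mem_rcone_of_mem_rcone L hinj hdisj h.2 m.2 (he ▸ hcone h hDh) (hcone m hDm)
  apply Finsupp.mem_support_iff.1 (lexp_mem_support (A.lexp_star hDm (hne0 m)).1)
  rw [← Finset.sum_eq_single_of_mem m (Finset.mem_attach _ m) hcoeff,
    ← Finsupp.finsetSum_apply, hsum, Finsupp.zero_apply]

theorem IsInvRep.unique (hH0 : (0 : SPoly R n) ∉ ℋ)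
    (hinj : Set.InjOn (lexp ord) (↑ℋ : Set (SPoly R n)))
    (hdisj : ∀ μ ∈ leadSet ord ℋ, ∀ ν ∈ leadSet ord ℋ, μ ≠ ν →
      Disjoint (rcone (L.mult (leadSet ord ℋ) μ) μ) (rcone (L.mult (leadSet ord ℋ) ν) ν))
    {f : SPoly R n} {P Q : {h // h ∈ ℋ} → SPoly R n}
    (hP : IsInvRep ord A L ℋ f P) (hQ : IsInvRep ord A L ℋ f Q) : P = Q := by
  refine sub_eq_zero.1 (eq_zero_of_sum_star_eq_zero A L hH0 hinj hdisj (fun h μ hμ i hi => ?_) ?_)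
  · rcases Finset.mem_union.1 (Finsupp.support_sub hμ) with hμ | hμ
    · exact (hP.2 h).1 μ hμ i hi
    · exact (hQ.2 h).1 μ hμ i hi
  · simp only [Pi.sub_apply, A.sub_star, Finset.sum_sub_distrib, ← hP.1, ← hQ.1, sub_self]

end InvolutiveRep

section Reduction

variable {K : Type} [Field K]

theorem lt_lexp_of_mem_support_sub_smul {f g : SPoly K n} (hg : g ≠ 0)
    (hgf : lexp ord g = lexp ord f) {μ : Fin n → ℕ}
    (hμ : μ ∈ (f - (f (lexp ord f) / g (lexp ord f)) • g).support) : μ ≺ lexp ord f := by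
  have hgtop : g (lexp ord f) ≠ 0 := hgf ▸ Finsupp.mem_support_iff.1 (lexp_mem_support hg)
  refine lt_of_le_of_ne ?_ fun he => Finsupp.mem_support_iff.1 hμ ?_
  · rcases Finset.mem_union.1 (Finsupp.support_sub hμ) with hμ | hμ
    · exact le_lexp hμ
    · exact hgf ▸ le_lexp (Finsupp.support_smul hμ)
  · rw [he, Finsupp.sub_apply, Finsupp.smul_apply, smul_eq_mul, div_mul_cancel₀ _ hgtop,
      sub_self]

variable (A : SolvMul K n ord) (L : InvDiv n) {ℋ : Finset (SPoly K n)}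

/-- One step of involutive reduction: subtracting `c • x^σ ⋆ h` cancels the leading term of
`f`, and a representation of the remainder extends to one of `f` with a nonzero
coefficient at `h`. -/
theorem exists_isInvRep_apply_ne_zero {I : Set (SPoly K n)}
    (hHI : (↑ℋ : Set (SPoly K n)) ⊆ I) (hH0 : (0 : SPoly K n) ∉ ℋ)
    (hIsub : ∀ f ∈ I, ∀ g ∈ I, f - g ∈ I)
    (hImul : ∀ f ∈ I, ∀ p : SPoly K n, A.star p f ∈ I)
    {h : SPoly K n} (hh : h ∈ ℋ) {f : SPoly K n} (hfI : f ∈ I) (hf0 : f ≠ 0)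
    (hcone : lexp ord f ∈ rcone (L.mult (leadSet ord ℋ) (lexp ord h)) (lexp ord h))
    (ih : ∀ g ∈ I, g ≠ 0 → lexp ord g ≺ lexp ord f → ∃ P, IsInvRep ord A L ℋ g P) :
    ∃ P, IsInvRep ord A L ℋ f P ∧ P ⟨h, hh⟩ ≠ 0 := by
  classical
  obtain ⟨σ, hσ, hlf⟩ := mem_rcone_iff.1 hcone
  set g := A.star (Finsupp.single σ 1) h
  obtain ⟨hg0, hglexp⟩ :=
    A.lexp_star (Finsupp.single_ne_zero.2 one_ne_zero) (ne_of_mem_of_not_mem hh hH0)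
  have hgf : lexp ord g = lexp ord f := by rw [hglexp, lexp_single one_ne_zero, hlf]
  set c := f (lexp ord f) / g (lexp ord f)
  have hc : c ≠ 0 := div_ne_zero (Finsupp.mem_support_iff.1 (lexp_mem_support hf0))
    (hgf ▸ Finsupp.mem_support_iff.1 (lexp_mem_support hg0))
  have hcg : A.star (Finsupp.single σ c) h = c • g := A.single_star σ c h
  have hr : ∀ μ ∈ (f - c • g).support, μ ≺ lexp ord f := fun μ hμ =>
    lt_lexp_of_mem_support_sub_smul hg0 hgf hμ
  -- The `h`-term of this representation stays below `lexp f`, so it cannot cancel `c • g`.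
  obtain ⟨P, hP, hPh⟩ : ∃ P, IsInvRep ord A L ℋ (f - c • g) P ∧
      ∀ μ ∈ (A.star (P ⟨h, hh⟩) h).support, μ ≺ lexp ord f := by
    rcases eq_or_ne (f - c • g) 0 with hr0 | hr0
    · exact ⟨0, hr0 ▸ isInvRep_zero A L, by simp [A.zero_star]⟩
    · have hrlt := hr _ (lexp_mem_support (ord := ord) hr0)
      obtain ⟨P, hP⟩ :=
        ih _ (hIsub f hfI _ (hcg ▸ hImul h (hHI hh) (Finsupp.single σ c))) hr0 hrlt
      exact ⟨P, hP, fun μ hμ => ((le_lexp hμ).trans (hP.lexp_star_le A L _)).trans_lt hrlt⟩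
  refine ⟨_, hP.add_single A L hh hσ (by rw [hcg, sub_add_cancel])
    (lexp_le (A.zero_le _) fun μ hμ => (hr μ hμ).le)
    (by rw [hcg, lexp_smul hc, hgf]; exact le_rfl),
    fun hPh0 => ?_⟩
  have hPh' : A.star (P ⟨h, hh⟩) h = -(c • g) := by
    have hsum : P ⟨h, hh⟩ + Finsupp.single σ c = 0 := by simpa using hPh0
    rw [eq_neg_of_add_eq_zero_left hsum, A.neg_star, hcg]
  refine lt_irrefl (α := OrdExp ord) _ (hPh _ ?_)
  rw [hPh', Finsupp.support_neg, Finsupp.support_smul_eq hc, ← hgf]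
  exact lexp_mem_support hg0

theorem WeakInvBasis.exists_isInvRep {I : Set (SPoly K n)} (hW : WeakInvBasis ord L I ℋ)
    (hIsub : ∀ f ∈ I, ∀ g ∈ I, f - g ∈ I)
    (hImul : ∀ f ∈ I, ∀ p : SPoly K n, A.star p f ∈ I)
    {f : SPoly K n} (hf : f ∈ I) : ∃ P, IsInvRep ord A L ℋ f P := by
  have := A.wellFoundedLT
  induction f using (InvImage.wf (β := OrdExp ord) (lexp ord) wellFounded_lt).induction with
  | _ f ih =>
  rcases eq_or_ne f 0 with rfl | hf0
  · exact ⟨0, isInvRep_zero A L⟩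
  have hlead : lexp ord f ∈ leadExps ord I := ⟨f, hf, hf0, rfl⟩
  obtain ⟨h, hh, hcone⟩ := mem_iUnion_rcone_leadSet.1 (hW.2.2 ▸ hlead)
  obtain ⟨P, hP, -⟩ := exists_isInvRep_apply_ne_zero A L hW.1 hW.2.1 hIsub hImul hh hf hf0
    hcone fun g hg _ hlt => ih g hlt hg
  exact ⟨P, hP⟩

theorem weakInvBasis_iff_forall_exists_isInvRep {I : Set (SPoly K n)}
    (hHI : (↑ℋ : Set (SPoly K n)) ⊆ I) (hH0 : (0 : SPoly K n) ∉ ℋ)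
    (hIsub : ∀ f ∈ I, ∀ g ∈ I, f - g ∈ I)
    (hImul : ∀ f ∈ I, ∀ p : SPoly K n, A.star p f ∈ I) :
    WeakInvBasis ord L I ℋ ↔ ∀ f ∈ I, ∃ P, IsInvRep ord A L ℋ f P := by
  refine ⟨fun hW f hf => hW.exists_isInvRep A L hIsub hImul hf, fun hrep => ⟨hHI, hH0,
    (iUnion_rcone_subset_leadExps A L hHI hH0 hImul).antisymm ?_⟩⟩
  rintro _ ⟨f, hf, hf0, rfl⟩
  obtain ⟨P, hP⟩ := hrep f hf
  exact mem_iUnion_rcone_leadSet.2 (hP.exists_lexp_mem_rcone A L hH0 hf0)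

theorem lexp_notMem_rcone_of_existsUnique {I : Set (SPoly K n)}
    (hHI : (↑ℋ : Set (SPoly K n)) ⊆ I) (hH0 : (0 : SPoly K n) ∉ ℋ)
    (hIsub : ∀ f ∈ I, ∀ g ∈ I, f - g ∈ I)
    (hImul : ∀ f ∈ I, ∀ p : SPoly K n, A.star p f ∈ I)
    (huniq : ∀ f ∈ I, ∃! P, IsInvRep ord A L ℋ f P) {h₁ h₂ : SPoly K n}
    (hh₁ : h₁ ∈ ℋ) (hh₂ : h₂ ∈ ℋ) (hne : h₁ ≠ h₂) :
    lexp ord h₁ ∉ rcone (L.mult (leadSet ord ℋ) (lexp ord h₂)) (lexp ord h₂) := by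
  classical
  intro hcone
  obtain ⟨P, hP, hPh₂⟩ := exists_isInvRep_apply_ne_zero A L hHI hH0 hIsub hImul hh₂
    (hHI hh₁) (ne_of_mem_of_not_mem hh₁ hH0) hcone fun g hg _ _ => (huniq g hg).exists
  apply hPh₂
  rw [(huniq h₁ (hHI hh₁)).unique hP (isInvRep_self A L hh₁), Pi.single_eq_of_ne]
  exact fun he => hne (congrArg Subtype.val he).symm

theorem strongInvBasis_iff_forall_existsUnique_isInvRep {I : Set (SPoly K n)}
    (hHI : (↑ℋ : Set (SPoly K n)) ⊆ I) (hH0 : (0 : SPoly K n) ∉ ℋ)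
    (hIsub : ∀ f ∈ I, ∀ g ∈ I, f - g ∈ I)
    (hImul : ∀ f ∈ I, ∀ p : SPoly K n, A.star p f ∈ I) :
    StrongInvBasis ord L I ℋ ↔ ∀ f ∈ I, ∃! P, IsInvRep ord A L ℋ f P := by
  have hweak := weakInvBasis_iff_forall_exists_isInvRep A L hHI hH0 hIsub hImul
  refine ⟨fun ⟨hW, hinj, hdisj⟩ f hf => ?_, fun huniq => ?_⟩
  · obtain ⟨P, hP⟩ := hweak.1 hW f hf
    exact ⟨P, hP, fun Q hQ => hQ.unique A L hH0 hinj hdisj hP⟩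
  have hcone {h₁ h₂ : SPoly K n} :=
    lexp_notMem_rcone_of_existsUnique (h₁ := h₁) (h₂ := h₂) A L hHI hH0 hIsub hImul huniq
  refine ⟨hweak.2 fun f hf => (huniq f hf).exists, fun h₁ hh₁ h₂ hh₂ he => ?_, ?_⟩
  · by_contra hne
    exact hcone hh₁ hh₂ hne (by rw [he]; exact self_mem_rcone _ _)
  · rintro _ hμ _ hν hne
    obtain ⟨h₁, hh₁, rfl⟩ := Finset.mem_image.1 hμ
    obtain ⟨h₂, hh₂, rfl⟩ := Finset.mem_image.1 hν
    have hne' : h₁ ≠ h₂ := fun he => hne (he ▸ rfl)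
    exact L.disjoint_rcone hμ hν (hcone hh₁ hh₂ hne') (hcone hh₂ hh₁ hne'.symm)

end Reduction

end TermOrder

theorem stmt14_general {K : Type} [Field K] {n : ℕ} (ord : LinearOrder (Fin n → ℕ))
    (A : SolvMul K n ord) (L : InvDiv n) (I : Set (SPoly K n))
    (hIadd : ∀ f ∈ I, ∀ g ∈ I, f + g ∈ I)
    (hIneg : ∀ f ∈ I, -f ∈ I)
    (hImul : ∀ f ∈ I, ∀ p : SPoly K n, A.star p f ∈ I)
    (ℋ : Finset (SPoly K n)) (hHI : (↑ℋ : Set (SPoly K n)) ⊆ I)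
    (hH0 : (0 : SPoly K n) ∉ ℋ) :
    (WeakInvBasis ord L I ℋ ↔ ∀ f ∈ I, ∃ P, IsInvRep ord A L ℋ f P) ∧
    (StrongInvBasis ord L I ℋ ↔ ∀ f ∈ I, ∃! P, IsInvRep ord A L ℋ f P) := by
  have hIsub : ∀ f ∈ I, ∀ g ∈ I, f - g ∈ I := fun f hf g hg =>
    sub_eq_add_neg f g ▸ hIadd f hf _ (hIneg g hg)
  exact ⟨weakInvBasis_iff_forall_exists_isInvRep A L hHI hH0 hIsub hImul,
    strongInvBasis_iff_forall_existsUnique_isInvRep A L hHI hH0 hIsub hImul⟩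

/-- Characterisation of weak and strong involutive bases by involutive standard
representations: a finite set `ℋ ⊂ I \ {0}` is a weak involutive basis of the nonzero
left ideal `I` iff every `f ∈ I` possesses an involutive standard representation with
respect to `ℋ`, and a strong involutive basis iff this representation is always
unique. -/
theorem stmt14 {K : Type} [Field K] {n : ℕ} (ord : LinearOrder (Fin n → ℕ))
    (A : SolvMul K n ord) (L : InvDiv n) (I : Set (SPoly K n))
    (hI0 : (0 : SPoly K n) ∈ I)
    (hIadd : ∀ f ∈ I, ∀ g ∈ I, f + g ∈ I)
    (hIneg : ∀ f ∈ I, -f ∈ I)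
    (hImul : ∀ f ∈ I, ∀ p : SPoly K n, A.star p f ∈ I)
    (hInz : I ≠ {0})
    (ℋ : Finset (SPoly K n)) (hHI : (↑ℋ : Set (SPoly K n)) ⊆ I)
    (hH0 : (0 : SPoly K n) ∉ ℋ) :
    (WeakInvBasis ord L I ℋ ↔ ∀ f ∈ I, ∃ P, IsInvRep ord A L ℋ f P) ∧
    (StrongInvBasis ord L I ℋ ↔ ∀ f ∈ I, ∃! P, IsInvRep ord A L ℋ f P) :=
  stmt14_general ord A L I hIadd hIneg hImul ℋ hHI hH0
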